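/- Let k, a be positive integers and n ≥ a a natural number. The number of ordered pairs (L, p), where L is a (k,a)-path of order n and p is a hump of L that is not a peak (i.e., a hump containing at least one horizontal step), equals the number of super (k,a)-paths of order n − a whose first non-horizontal step is an up step; equivalently, the total number of humps minus the total number of peaks over all paths in P_n(k,a) equals |SP^U_{n−a}(k,a)|. -/

import Mathlib

/-- Steps for `(k,a)`-paths: up `U = (1,k)`, down `D = (1,-1)`, horizontal `H = (a,0)`. -/
inductive Step : Type
  | U : Step
  | D : Step
  | H : Step
  deriving DecidableEq

/-- The displacement of a single step. -/
def stepDisp (k a : ℕ) : Step → ℤ × ℤ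
  | Step.U => (1, (k : ℤ))
  | Step.D => (1, -1)
  | Step.H => ((a : ℤ), 0)

/-- The total displacement of a word of steps. -/
def pathDisp (k a : ℕ) (w : List Step) : ℤ × ℤ := (w.map (stepDisp k a)).sum

/-- A super `(k,a)`-path of order `n`: a step word with total displacement `(n,0)`. -/
def IsSuperPath (k a n : ℕ) (w : List Step) : Prop :=
  pathDisp k a w = ((n : ℤ), 0)

/-- A `(k,a)`-path of order `n`: a super path all of whose partial sums have
nonnegative `y`-coordinate. -/
def IsPath (k a n : ℕ) (w : List Step) : Prop :=
  IsSuperPath k a n w ∧ ∀ p : List Step, p <+: w → 0 ≤ (pathDisp k a p).2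

/-- The first letter different from `H` exists and is `U`. -/
def FirstNonHIsU (w : List Step) : Prop :=
  ∃ (l : ℕ) (r : List Step), w = List.replicate l Step.H ++ Step.U :: r

/-- There is a hump (a factor `U H^j D` for some `j ≥ 0`) starting at position `i` of `w`. -/
def IsHumpAt (w : List Step) (i : ℕ) : Prop :=
  ∃ j : ℕ, (Step.U :: (List.replicate j Step.H ++ [Step.D])) <+: w.drop i

/-- There is a peak (the factor `UD`, i.e. a hump with `j = 0`) starting at position `i`. -/
def IsPeakAt (w : List Step) (i : ℕ) : Prop :=
  [Step.U, Step.D] <+: w.drop i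

/-!
A path with a marked hump that is not a peak factors uniquely as `L = P U H^(j+1) D Q`, where
all prefixes of `P` have nonnegative height and `Q` ends at its own minimum height. The word
`H^j U Q D P` has lost one horizontal step, so it is a super path of order `n - a` whose first
non-horizontal step is `U`. Conversely, in a super path `H^j U r` the tail `r` has height `-k < 0`,
and the factorisation `r = Q D P` with `Q` ending at its minimum and `P` nonnegative exists and
is unique: `Q D` must be the shortest prefix of `r` of minimal height.
-/

lemma replicate_append_cons_inj {α : Type*} {x c : α} (hc : c ≠ x) {j j' : ℕ}
    {s s' : List α} (h : List.replicate j x ++ c :: s = List.replicate j' x ++ c :: s') :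
    j = j' ∧ s = s' := by
  induction j generalizing j' with
  | zero => cases j' <;> simp_all [List.replicate_succ]
  | succ j ih =>
    cases j' with
    | zero => simp [List.replicate_succ] at h; exact absurd h.1.symm hc
    | succ j' => simpa using ih (by simpa [List.replicate_succ] using h)

namespace Step

def height (k : ℕ) : Step → ℤ
  | U => k
  | D => -1
  | H => 0

@[simp] lemma height_U (k : ℕ) : U.height k = k := rfl
@[simp] lemma height_D (k : ℕ) : D.height k = -1 := rfl
@[simp] lemma height_H (k : ℕ) : H.height k = 0 := rfl

end Step

def height (k : ℕ) (w : List Step) : ℤ := (w.map (Step.height k)).sum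

@[simp] lemma height_nil (k : ℕ) : height k [] = 0 := rfl

@[simp] lemma height_cons (k : ℕ) (c : Step) (w : List Step) :
    height k (c :: w) = c.height k + height k w := by
  simp [height]

@[simp] lemma height_append (k : ℕ) (u v : List Step) :
    height k (u ++ v) = height k u + height k v := by
  simp [height]

@[simp] lemma height_replicate_H (k m : ℕ) : height k (List.replicate m Step.H) = 0 := by
  simp [height, List.map_replicate]

lemma snd_pathDisp (k a : ℕ) (w : List Step) : (pathDisp k a w).2 = height k w := by
  induction w with
  | nil => rfl
  | cons c w ih =>
    simp only [pathDisp, List.map_cons, List.sum_cons, Prod.snd_add] at ih ⊢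
    cases c <;> simp [stepDisp, ih]

def PrefixHeightsGE (k : ℕ) (b : ℤ) (w : List Step) : Prop :=
  ∀ p, p <+: w → b ≤ height k p

namespace PrefixHeightsGE

variable {k : ℕ} {b : ℤ} {w : List Step}

lemma le_zero (h : PrefixHeightsGE k b w) : b ≤ 0 := h [] List.nil_prefix

lemma le_height (h : PrefixHeightsGE k b w) : b ≤ height k w := h w (List.prefix_refl w)

lemma mono {b' : ℤ} (hb : b' ≤ b) (h : PrefixHeightsGE k b w) : PrefixHeightsGE k b' w :=
  fun p hp => hb.trans (h p hp)

end PrefixHeightsGE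

@[simp] lemma prefixHeightsGE_nil {k : ℕ} {b : ℤ} : PrefixHeightsGE k b [] ↔ b ≤ 0 := by
  simp [PrefixHeightsGE]

@[simp] lemma prefixHeightsGE_cons {k : ℕ} {b : ℤ} {c : Step} {w : List Step} :
    PrefixHeightsGE k b (c :: w) ↔ b ≤ 0 ∧ PrefixHeightsGE k (b - c.height k) w := by
  simp only [PrefixHeightsGE, List.prefix_cons_iff, forall_eq_or_imp, height_nil]
  refine and_congr_right fun _ => ⟨fun h p hp => ?_, fun h p ⟨t, hp, ht⟩ => ?_⟩
  · have := h (c :: p) ⟨p, rfl, hp⟩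
    simp only [height_cons] at this
    linarith
  · subst hp
    have := h t ht
    simp only [height_cons]
    linarith

@[simp] lemma prefixHeightsGE_append {k : ℕ} {b : ℤ} {u v : List Step} :
    PrefixHeightsGE k b (u ++ v) ↔
      PrefixHeightsGE k b u ∧ PrefixHeightsGE k (b - height k u) v := by
  induction u generalizing b with
  | nil => simp [and_iff_right_of_imp PrefixHeightsGE.le_zero]
  | cons c u ih => simp [ih, sub_sub, and_assoc]

@[simp] lemma prefixHeightsGE_replicate_H {k : ℕ} {b : ℤ} {m : ℕ} :
    PrefixHeightsGE k b (List.replicate m Step.H) ↔ b ≤ 0 := by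
  induction m with
  | zero => simp
  | succ m ih => simp [List.replicate_succ, ih]

/-- `Q D` is the shortest prefix of `r` of minimal height. -/
lemma exists_split_at_first_minimum {k : ℕ} {r : List Step} (hr : ¬ PrefixHeightsGE k 0 r) :
    ∃ Q P, r = Q ++ Step.D :: P ∧
      PrefixHeightsGE k (height k Q) Q ∧ PrefixHeightsGE k 0 P := by
  induction r with
  | nil => simp at hr
  | cons c s ih =>
    simp only [prefixHeightsGE_cons, le_refl, true_and, zero_sub] at hr
    by_cases hs : PrefixHeightsGE k 0 s
    · have hc : c = Step.D := by
        cases c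
        all_goals first
          | rfl
          | exact absurd (hs.mono (by simp)) hr
      subst hc
      exact ⟨[], s, rfl, by simp, hs⟩
    · obtain ⟨Q, P, rfl, hQ, hP⟩ := ih hs
      refine ⟨c :: Q, P, rfl, ?_, hP⟩
      simp only [prefixHeightsGE_cons, height_cons, add_sub_cancel_left]
      refine ⟨?_, hQ⟩
      by_contra! hpos
      apply hr
      simp only [prefixHeightsGE_append, prefixHeightsGE_cons, Step.height_D]
      exact ⟨hQ.mono (by linarith), by linarith, hP.mono (by linarith)⟩

lemma split_at_first_minimum_unique {k : ℕ} {Q₁ P₁ Q₂ P₂ : List Step}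
    (heq : Q₁ ++ Step.D :: P₁ = Q₂ ++ Step.D :: P₂)
    (hQ₁ : PrefixHeightsGE k (height k Q₁) Q₁) (hP₁ : PrefixHeightsGE k 0 P₁)
    (hQ₂ : PrefixHeightsGE k (height k Q₂) Q₂) (hP₂ : PrefixHeightsGE k 0 P₂) :
    Q₁ = Q₂ ∧ P₁ = P₂ := by
  have no_later_minimum {Q P m : List Step}
      (hQ : PrefixHeightsGE k (height k (Q ++ Step.D :: m)) (Q ++ Step.D :: m))
      (hP : PrefixHeightsGE k 0 (m ++ Step.D :: P)) : False := by
    simp only [prefixHeightsGE_append, prefixHeightsGE_cons, height_append, height_cons,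
      Step.height_D] at hQ hP
    linarith [hQ.2.2.le_zero, hP.2.2.le_zero]
  rcases List.append_eq_append_iff.mp heq with
    ⟨_ | ⟨c, m⟩, rfl, h⟩ | ⟨_ | ⟨c, m⟩, rfl, h⟩
  · simpa using h
  · obtain ⟨rfl, rfl⟩ := List.cons.inj h
    exact (no_later_minimum hQ₂ hP₁).elim
  · simpa using h.symm
  · obtain ⟨rfl, rfl⟩ := List.cons.inj h
    exact (no_later_minimum hQ₁ hP₂).elim

@[simp] lemma pathDisp_nil (k a : ℕ) : pathDisp k a [] = 0 := rfl

@[simp] lemma pathDisp_cons (k a : ℕ) (c : Step) (w : List Step) :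
    pathDisp k a (c :: w) = stepDisp k a c + pathDisp k a w := by
  simp [pathDisp]

@[simp] lemma pathDisp_append (k a : ℕ) (u v : List Step) :
    pathDisp k a (u ++ v) = pathDisp k a u + pathDisp k a v := by
  simp [pathDisp]

lemma IsSuperPath.height_eq_zero {k a n : ℕ} {w : List Step} (hw : IsSuperPath k a n w) :
    height k w = 0 := by
  rw [← snd_pathDisp k a, hw]

lemma isPath_iff {k a n : ℕ} {w : List Step} :
    IsPath k a n w ↔ IsSuperPath k a n w ∧ PrefixHeightsGE k 0 w := by
  simp [IsPath, PrefixHeightsGE, snd_pathDisp]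

def humpWord (P : List Step) (j : ℕ) (Q : List Step) : List Step :=
  P ++ Step.U :: (List.replicate (j + 1) Step.H ++ Step.D :: Q)

def rotatedWord (P : List Step) (j : ℕ) (Q : List Step) : List Step :=
  List.replicate j Step.H ++ Step.U :: (Q ++ Step.D :: P)

lemma pathDisp_humpWord (k a : ℕ) (P : List Step) (j : ℕ) (Q : List Step) :
    pathDisp k a (humpWord P j Q) = pathDisp k a (rotatedWord P j Q) + stepDisp k a Step.H := by
  simp only [humpWord, rotatedWord, pathDisp_append, pathDisp_cons, List.replicate_succ',
    pathDisp_nil]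
  abel

lemma isSuperPath_humpWord_iff {k a n : ℕ} (han : a ≤ n) {P : List Step} {j : ℕ}
    {Q : List Step} :
    IsSuperPath k a n (humpWord P j Q) ↔ IsSuperPath k a (n - a) (rotatedWord P j Q) := by
  rw [IsSuperPath, IsSuperPath, pathDisp_humpWord, Nat.cast_sub han, ← eq_sub_iff_add_eq]
  simp [stepDisp]

lemma isPath_humpWord_iff {k a n : ℕ} {P : List Step} {j : ℕ} {Q : List Step} :
    IsPath k a n (humpWord P j Q) ↔ IsSuperPath k a n (humpWord P j Q) ∧
      PrefixHeightsGE k 0 P ∧ PrefixHeightsGE k (height k Q) Q := by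
  rw [isPath_iff]
  refine and_congr_right fun hw => ?_
  have hQ : 1 - height k P - k = height k Q := by
    have := hw.height_eq_zero
    simp [humpWord] at this
    linarith
  simp only [humpWord, prefixHeightsGE_append, prefixHeightsGE_cons, Step.height_U,
    Step.height_D, prefixHeightsGE_replicate_H, height_replicate_H]
  rw [show 0 - height k P - k - 0 - -1 = height k Q by linarith]
  refine and_congr_right fun hP => ?_
  have := hP.le_height
  exact ⟨fun h => h.2.2.2, fun h => ⟨by linarith, by linarith, by linarith, h⟩⟩

lemma isHumpAt_and_not_isPeakAt_iff {L : List Step} {i : ℕ} :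
    IsHumpAt L i ∧ ¬ IsPeakAt L i ↔ ∃ P j Q, L = humpWord P j Q ∧ P.length = i := by
  constructor
  · rintro ⟨⟨_ | j, Q, hQ⟩, hpeak⟩
    · exact absurd ⟨Q, hQ⟩ hpeak
    · have hi : i ≤ L.length := by
        by_contra! hi
        simp [List.drop_eq_nil_of_le hi.le] at hQ
      refine ⟨L.take i, j, Q, ?_, by simp [hi]⟩
      conv_lhs => rw [← List.take_append_drop i L, ← hQ]
      simp [humpWord]
  · rintro ⟨P, j, Q, rfl, rfl⟩
    simp only [IsHumpAt, IsPeakAt, humpWord, List.drop_left]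
    exact ⟨⟨j + 1, Q, by simp⟩, by simp [List.replicate_succ]⟩

def humpDecompositions (k a n : ℕ) : Set (List Step × ℕ × List Step) :=
  {t | IsPath k a n (humpWord t.1 t.2.1 t.2.2)}

lemma markedHumps_eq_image (k a n : ℕ) :
    {Lp : List Step × ℕ | IsPath k a n Lp.1 ∧ IsHumpAt Lp.1 Lp.2 ∧ ¬ IsPeakAt Lp.1 Lp.2} =
      (fun t => (humpWord t.1 t.2.1 t.2.2, t.1.length)) '' humpDecompositions k a n := by
  ext ⟨L, i⟩
  simp only [Set.mem_ofPred_eq, isHumpAt_and_not_isPeakAt_iff, Set.mem_image, Prod.exists,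
    Prod.mk.injEq, humpDecompositions]
  constructor
  · rintro ⟨hL, P, j, Q, rfl, rfl⟩
    exact ⟨P, j, Q, hL, rfl, rfl⟩
  · rintro ⟨P, j, Q, hL, rfl, rfl⟩
    exact ⟨hL, P, j, Q, rfl, rfl⟩

lemma markHump_injective :
    Function.Injective fun t : List Step × ℕ × List Step =>
      (humpWord t.1 t.2.1 t.2.2, t.1.length) := by
  rintro ⟨P, j, Q⟩ ⟨P', j', Q'⟩ h
  simp only [Prod.mk.injEq, humpWord] at h
  obtain ⟨rfl, hrest⟩ := List.append_inj h.1 h.2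
  obtain ⟨hj, rfl⟩ := replicate_append_cons_inj (by decide) (List.cons.inj hrest).2
  rw [Nat.succ_inj.mp hj]

lemma rotatedWord_injOn (k a n : ℕ) :
    Set.InjOn (fun t => rotatedWord t.1 t.2.1 t.2.2) (humpDecompositions k a n) := by
  rintro ⟨P, j, Q⟩ ht ⟨P', j', Q'⟩ ht' h
  simp only [humpDecompositions, Set.mem_ofPred_eq, isPath_humpWord_iff] at ht ht'
  obtain ⟨rfl, h⟩ := replicate_append_cons_inj (by decide) h
  obtain ⟨rfl, rfl⟩ := split_at_first_minimum_unique h ht.2.2 ht.2.1 ht'.2.2 ht'.2.1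
  rfl

lemma superPathsFirstU_eq_image {k a n : ℕ} (hk : 0 < k) (han : a ≤ n) :
    {w : List Step | IsSuperPath k a (n - a) w ∧ FirstNonHIsU w} =
      (fun t => rotatedWord t.1 t.2.1 t.2.2) '' humpDecompositions k a n := by
  ext w
  simp only [Set.mem_ofPred_eq, Set.mem_image, Prod.exists, humpDecompositions,
    isPath_humpWord_iff, isSuperPath_humpWord_iff han]
  constructor
  · rintro ⟨hw, l, r, rfl⟩
    have hr : height k r = -k := by
      have := hw.height_eq_zero
      simp only [height_append, height_cons, height_replicate_H, Step.height_U] at this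
      linarith
    have hr_neg : ¬ PrefixHeightsGE k 0 r := fun h => by
      have := h.le_height
      omega
    obtain ⟨Q, P, rfl, hQ, hP⟩ := exists_split_at_first_minimum hr_neg
    exact ⟨P, l, Q, ⟨hw, hP, hQ⟩, rfl⟩
  · rintro ⟨P, j, Q, ⟨hw, -⟩, rfl⟩
    exact ⟨hw, j, Q ++ Step.D :: P, rfl⟩

theorem stmt4_general (k a n : ℕ) (hk : 0 < k) (han : a ≤ n) :
    {Lp : List Step × ℕ |
        IsPath k a n Lp.1 ∧ IsHumpAt Lp.1 Lp.2 ∧ ¬ IsPeakAt Lp.1 Lp.2}.ncard =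
      {w : List Step | IsSuperPath k a (n - a) w ∧ FirstNonHIsU w}.ncard := by
  rw [markedHumps_eq_image, superPathsFirstU_eq_image hk han,
    Set.ncard_image_of_injective _ markHump_injective, (rotatedWord_injOn k a n).ncard_image]

/-- The number of pairs `(L, p)` with `L` a `(k,a)`-path of order `n` and `p` a hump
of `L` that is not a peak equals the number of super `(k,a)`-paths of order `n − a`
whose first non-horizontal step is an up step. -/
theorem stmt4 (k a n : ℕ) (hk : 0 < k) (ha : 0 < a) (han : a ≤ n) :
    {Lp : List Step × ℕ |
        IsPath k a n Lp.1 ∧ IsHumpAt Lp.1 Lp.2 ∧ ¬ IsPeakAt Lp.1 Lp.2}.ncard =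
      {w : List Step | IsSuperPath k a (n - a) w ∧ FirstNonHIsU w}.ncard :=
  stmt4_general k a n hk han
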